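/- The expectation value of the symmetric generalized binomial distribution equals that of the ordinary binomial: ∑_{k=0}^n k · 𝔭_k^{(n)}(η) = η n for all n and η ∈ [0,1], where 𝔭_k^{(n)}(η) = (x_n!/(x_{n-k}! x_k!)) q_k(η) q_{n-k}(1-η). -/

import Mathlib

open PowerSeries Finset

/-- Formal exponential of a power series (intended for series with zero constant term):
coefficientwise `exp F = ∑_k F^k / k!`, which is a finite sum in each coefficient. -/
noncomputable def expS (F : PowerSeries ℝ) : PowerSeries ℝ :=
  PowerSeries.mk fun n => ∑ k ∈ Finset.range (n + 1),
    (1 / (k.factorial : ℝ)) * PowerSeries.coeff n (F ^ k)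

/-- Formal logarithm of a power series (intended for series with constant term 1):
coefficientwise `log N = ∑_{k≥1} (-1)^{k+1} (N-1)^k / k`. -/
noncomputable def logS (N : PowerSeries ℝ) : PowerSeries ℝ :=
  PowerSeries.mk fun n => ∑ k ∈ Finset.range (n + 1),
    ((-1 : ℝ) ^ (k + 1) / (k : ℝ)) * PowerSeries.coeff n ((N - 1) ^ k)

/-- The formal power `N^η := exp (η · log N)`. -/
noncomputable def powS (N : PowerSeries ℝ) (η : ℝ) : PowerSeries ℝ :=
  expS (η • logS N)

/-- Deformed factorial `x_n! = x_1 x_2 ⋯ x_n`, with `x_0! = 1`. -/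
noncomputable def xfac (x : ℕ → ℝ) (n : ℕ) : ℝ := ∏ k ∈ Finset.Icc 1 n, x k

/-!
Write `L = log N` and `N^η = exp (η L)`. Identified with Mathlib's `exp` and `log (1 + X)`
substituted into `η L` and `N - 1`, the chain rule gives `(N^η)' = η L' N^η` and `N L' = N'`.
Uniqueness for the linear equation `y' = h y` then yields `N^a N^b = N^(a+b)` and `N^1 = N`, so
`(N^η)' N^(1-η) = η N'`. The Euler operator `X d/dX` multiplies the `k`-th coefficient by `k`, so
the coefficient of `X^n` in `X (N^η)' N^(1-η) = η X N'` is the claimed identity divided by `x_n!`.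
-/

namespace PowerSeries

lemma coeff_subst_eq_sum_range {R : Type*} [CommRing R] {g : R⟦X⟧}
    (hg : constantCoeff g = 0) (f : R⟦X⟧) (n : ℕ) :
    coeff n (f.subst g) = ∑ k ∈ range (n + 1), coeff k f * coeff n (g ^ k) := by
  rw [coeff_subst' (HasSubst.of_constantCoeff_zero' hg)]
  refine finsum_eq_sum_of_support_subset _ fun k hk => ?_
  rw [coe_range, Set.mem_Iio, Nat.lt_succ_iff]
  by_contra! hnk
  refine hk ?_
  change coeff k f • coeff n (g ^ k) = 0
  have hlt : (n : ℕ∞) < (g ^ k).order :=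
    (Nat.cast_lt.2 hnk).trans_le (le_order_pow_of_constantCoeff_eq_zero k hg)
  rw [coeff_of_lt_order n hlt, smul_zero]

lemma eq_of_derivative_eq_mul {R : Type*} [CommRing R] [IsAddTorsionFree R]
    {h A B : R⟦X⟧} (hA : d⁄dX R A = h * A) (hB : d⁄dX R B = h * B)
    (h0 : constantCoeff A = constantCoeff B) : A = B := by
  ext n
  induction n using Nat.strong_induction_on with
  | _ n ih =>
    cases n with
    | zero => simpa using h0
    | succ m =>
      have hm : coeff m (d⁄dX R A) = coeff m (d⁄dX R B) := by
        rw [hA, hB, coeff_mul, coeff_mul]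
        refine sum_congr rfl fun p hp => ?_
        rw [ih p.2 (by have := mem_antidiagonal.1 hp; omega)]
      rw [coeff_derivative, coeff_derivative, ← Nat.cast_succ, mul_comm, ← nsmul_eq_mul,
        mul_comm, ← nsmul_eq_mul] at hm
      exact (smul_right_inj m.succ_ne_zero).1 hm

lemma one_add_X_mul_derivative_log :
    (1 + X) * d⁄dX ℝ (log ℝ) = 1 := by
  ext n
  cases n <;> simp [add_mul, deriv_log, coeff_succ_X_mul, pow_succ]

lemma coeff_X_mul_derivative {R : Type*} [CommSemiring R] (A : R⟦X⟧) (n : ℕ) :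
    coeff n (X * d⁄dX R A) = n * coeff n A := by
  cases n with
  | zero => simp
  | succ m => rw [coeff_succ_X_mul, coeff_derivative, mul_comm, Nat.cast_succ]

end PowerSeries

lemma expS_eq_subst {F : ℝ⟦X⟧} (hF : constantCoeff F = 0) : expS F = (exp ℝ).subst F := by
  ext n
  rw [expS, coeff_mk, coeff_subst_eq_sum_range hF]
  simp [coeff_exp]

lemma logS_eq_logOf {N : ℝ⟦X⟧} (hN : constantCoeff N = 1) : logS N = logOf N := by
  ext n
  rw [logS, coeff_mk, logOf, coeff_subst_eq_sum_range (by simp [hN])]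
  refine sum_congr rfl fun k _ => ?_
  -- the `k = 0` term of `logS` is `(-1) / 0 = 0`, matching the constant term of `log`
  rcases eq_or_ne k 0 with rfl | hk <;> simp [*]

lemma derivative_expS {F : ℝ⟦X⟧} (hF : constantCoeff F = 0) :
    d⁄dX ℝ (expS F) = expS F * d⁄dX ℝ F := by
  rw [expS_eq_subst hF, derivative_subst (HasSubst.of_constantCoeff_zero' hF), derivative_exp]

lemma constantCoeff_expS (F : ℝ⟦X⟧) : constantCoeff (expS F) = 1 := by
  rw [← coeff_zero_eq_constantCoeff_apply, expS, coeff_mk]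
  simp

lemma constantCoeff_logS {N : ℝ⟦X⟧} (hN : constantCoeff N = 1) : constantCoeff (logS N) = 0 := by
  rw [logS_eq_logOf hN, constantCoeff_logOf hN]

lemma mul_derivative_logS {N : ℝ⟦X⟧} (hN : constantCoeff N = 1) :
    N * d⁄dX ℝ (logS N) = d⁄dX ℝ N := by
  have hu : HasSubst (N - 1) := HasSubst.of_constantCoeff_zero' (by simp [hN])
  have hN' : (1 + X : ℝ⟦X⟧).subst (N - 1) = N := by
    rw [← coe_substAlgHom hu, map_add, map_one, substAlgHom_X]
    ring
  calc N * d⁄dX ℝ (logS N)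
      = (1 + X : ℝ⟦X⟧).subst (N - 1) * ((d⁄dX ℝ (log ℝ)).subst (N - 1) * d⁄dX ℝ (N - 1)) := by
        rw [hN', logS_eq_logOf hN, logOf, derivative_subst hu]
    _ = ((1 + X) * d⁄dX ℝ (log ℝ)).subst (N - 1) * d⁄dX ℝ (N - 1) := by
        rw [subst_mul hu, mul_assoc]
    _ = d⁄dX ℝ N := by
        rw [one_add_X_mul_derivative_log, ← coe_substAlgHom hu, map_one, one_mul, map_sub,
          derivative_one, sub_zero]

lemma derivative_powS {N : ℝ⟦X⟧} (hN : constantCoeff N = 1) (a : ℝ) :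
    d⁄dX ℝ (powS N a) = (a • d⁄dX ℝ (logS N)) * powS N a := by
  rw [powS, derivative_expS (by simp [constantCoeff_logS hN]), Derivation.map_smul, mul_comm]

lemma powS_add {N : ℝ⟦X⟧} (hN : constantCoeff N = 1) (a b : ℝ) :
    powS N (a + b) = powS N a * powS N b := by
  refine eq_of_derivative_eq_mul (h := (a + b) • d⁄dX ℝ (logS N)) (derivative_powS hN _) ?_ ?_
  · rw [Derivation.leibniz, derivative_powS hN, derivative_powS hN]
    simp only [smul_eq_C_mul, smul_eq_mul, map_add]
    ring
  · simp only [powS, constantCoeff_expS, map_mul, mul_one]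

lemma powS_one {N : ℝ⟦X⟧} (hN : constantCoeff N = 1) : powS N 1 = N := by
  refine eq_of_derivative_eq_mul (h := d⁄dX ℝ (logS N)) ?_ ?_ ?_
  · rw [derivative_powS hN, one_smul]
  · rw [← mul_derivative_logS hN, mul_comm]
  · rw [powS, constantCoeff_expS, hN]

lemma derivative_powS_mul_powS_one_sub {N : ℝ⟦X⟧} (hN : constantCoeff N = 1) (η : ℝ) :
    d⁄dX ℝ (powS N η) * powS N (1 - η) = η • d⁄dX ℝ N := by
  rw [derivative_powS hN, mul_assoc, ← powS_add hN, add_sub_cancel, powS_one hN,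
    ← mul_derivative_logS hN, smul_mul_assoc, mul_comm]

lemma xfac_pos {x : ℕ → ℝ} (hx : ∀ n, 1 ≤ n → 0 < x n) (n : ℕ) : 0 < xfac x n :=
  prod_pos fun k hk => hx k (mem_Icc.1 hk).1

theorem stmt9 (x : ℕ → ℝ) (hx : ∀ n, 1 ≤ n → 0 < x n)
    (N : PowerSeries ℝ) (hN : N = PowerSeries.mk fun n => 1 / xfac x n)
    (q : ℕ → ℝ → ℝ)
    (hq : ∀ n η, q n η = xfac x n * PowerSeries.coeff n (powS N η))
    (p : ℕ → ℕ → ℝ → ℝ)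
    (hp : ∀ n k η, p n k η =
      (xfac x n / (xfac x (n - k) * xfac x k)) * q k η * q (n - k) (1 - η)) :
    ∀ (n : ℕ), ∀ η ∈ Set.Icc (0 : ℝ) 1,
      ∑ k ∈ Finset.range (n + 1), (k : ℝ) * p n k η = η * n := by
  have hxfac (m : ℕ) : xfac x m ≠ 0 := (xfac_pos hx m).ne'
  have hcoeffN (m : ℕ) : coeff m N = 1 / xfac x m := by rw [hN, coeff_mk]
  have hN1 : constantCoeff N = 1 := by
    rw [← coeff_zero_eq_constantCoeff_apply, hcoeffN, xfac, Icc_eq_empty_of_lt one_pos,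
      prod_empty, div_one]
  intro n η _
  calc ∑ k ∈ range (n + 1), (k : ℝ) * p n k η
      = xfac x n * ∑ k ∈ range (n + 1),
          coeff k (X * d⁄dX ℝ (powS N η)) * coeff (n - k) (powS N (1 - η)) := by
        rw [mul_sum]
        refine sum_congr rfl fun k _ => ?_
        rw [hp, hq, hq, coeff_X_mul_derivative]
        field_simp [hxfac k, hxfac (n - k)]
    _ = xfac x n * coeff n (η • (X * d⁄dX ℝ N)) := by
        rw [← mul_smul_comm, ← derivative_powS_mul_powS_one_sub hN1, ← mul_assoc, coeff_mul,
          Nat.sum_antidiagonal_eq_sum_range_succ_mk]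
    _ = η * n := by
        rw [map_smul, coeff_X_mul_derivative, hcoeffN, smul_eq_mul]
        field_simp [hxfac n]
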